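/- Let Γ=(G,σ) be a weighted signed graph and μ a measure on V. For every nonempty subset S ⊆ V, the minimum of β^σ(V₁, V₂) over all bipartitions of S (pairs of disjoint sets V₁, V₂ with V₁ ∪ V₂ = S) equals the minimum of ρ^{σ'}(S) over all signatures σ' switching equivalent to σ. -/
import Mathlib


open Finset Real

open scoped Classical

noncomputable section

namespace SignedGraph

variable {N : ℕ}

/-- The degree `d(u) = Σ_v w(u,v)` of a vertex. -/
def deg (w : Fin N → Fin N → ℝ) (u : Fin N) : ℝ := ∑ v, w u v

/-- Hypotheses making `(w, sgn)` a weighted signed graph: `w` is a symmetric nonnegative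
weight function vanishing on the diagonal and `sgn` is a symmetric `±1`-valued signature. -/
structure IsWSG {N : ℕ} (w : Fin N → Fin N → ℝ) (sgn : Fin N → Fin N → ℝ) : Prop where
  w_symm : ∀ u v, w u v = w v u
  w_nonneg : ∀ u v, 0 ≤ w u v
  w_loopless : ∀ u, w u u = 0
  sgn_symm : ∀ u v, sgn u v = sgn v u
  sgn_pm : ∀ u v, sgn u v = 1 ∨ sgn u v = -1

/-- The signature obtained from `sgn` by switching with the function `θ : V → {±1}`. -/
def switchSgn (sgn : Fin N → Fin N → ℝ) (θ : Fin N → ℝ) : Fin N → Fin N → ℝ :=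
  fun u v => θ u * sgn u v * θ v

/-- `|E(S,T)| = Σ_{u∈S, v∈T} w(u,v)`. -/
def EE (w : Fin N → Fin N → ℝ) (S T : Finset (Fin N)) : ℝ := ∑ u ∈ S, ∑ v ∈ T, w u v

/-- `|E⁺(S,T)|`: total weight of positive edges from `S` to `T`. -/
def Epos (w sgn : Fin N → Fin N → ℝ) (S T : Finset (Fin N)) : ℝ :=
  ∑ u ∈ S, ∑ v ∈ T, if sgn u v = 1 then w u v else 0

/-- `|E⁻(S,T)|`: total weight of negative edges from `S` to `T`. -/
def Eneg (w sgn : Fin N → Fin N → ℝ) (S T : Finset (Fin N)) : ℝ :=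
  ∑ u ∈ S, ∑ v ∈ T, if sgn u v = -1 then w u v else 0

/-- `vol_μ(S) = Σ_{u∈S} μ(u)`. -/
def vol (μ : Fin N → ℝ) (S : Finset (Fin N)) : ℝ := ∑ u ∈ S, μ u

/-- The signed bipartiteness ratio `β^σ(V₁,V₂)`. -/
def betaR (w sgn : Fin N → Fin N → ℝ) (μ : Fin N → ℝ) (V1 V2 : Finset (Fin N)) : ℝ :=
  (2 * Epos w sgn V1 V2 + Eneg w sgn V1 V1 + Eneg w sgn V2 V2 +
      EE w (V1 ∪ V2) (V1 ∪ V2)ᶜ) / vol μ (V1 ∪ V2)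

/-- The signed Cheeger constant `h₁^σ(μ)`: the minimum of `β^σ(V₁,V₂)` over all pairs of
disjoint subsets with nonempty union. -/
def h1 (w sgn : Fin N → Fin N → ℝ) (μ : Fin N → ℝ) : ℝ :=
  sInf {x | ∃ V1 V2 : Finset (Fin N),
    Disjoint V1 V2 ∧ (V1 ∪ V2).Nonempty ∧ x = betaR w sgn μ V1 V2}

/-- The signed expansion `ρ^σ(S) = (|E⁻(S)| + |E(S, V∖S)|)/vol_μ(S)`. -/
def rho (w sgn : Fin N → Fin N → ℝ) (μ : Fin N → ℝ) (S : Finset (Fin N)) : ℝ :=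
  (Eneg w sgn S S + EE w S Sᶜ) / vol μ S

lemma Epos_comm {N : ℕ} (w sgn : Fin N → Fin N → ℝ) (hG : IsWSG w sgn)
    (V1 V2 : Finset (Fin N)) : Epos w sgn V2 V1 = Epos w sgn V1 V2 := by
  unfold Epos
  rw [Finset.sum_comm]
  refine Finset.sum_congr rfl fun u _ => Finset.sum_congr rfl fun v _ => ?_
  rw [hG.sgn_symm, hG.w_symm]

lemma key_eq {N : ℕ} (w sgn : Fin N → Fin N → ℝ) (hG : IsWSG w sgn) (μ : Fin N → ℝ)
    (V1 V2 : Finset (Fin N)) (hd : Disjoint V1 V2) (θ : Fin N → ℝ)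
    (hθ1 : ∀ u ∈ V1, θ u = 1) (hθ2 : ∀ u ∈ V2, θ u = -1) :
    betaR w sgn μ V1 V2 = rho w (switchSgn sgn θ) μ (V1 ∪ V2) := by
  unfold betaR rho
  congr 1
  have hsplit : Eneg w (switchSgn sgn θ) (V1 ∪ V2) (V1 ∪ V2)
      = (Eneg w (switchSgn sgn θ) V1 V1 + Eneg w (switchSgn sgn θ) V1 V2)
        + (Eneg w (switchSgn sgn θ) V2 V1 + Eneg w (switchSgn sgn θ) V2 V2) := by
    unfold Eneg
    rw [Finset.sum_union hd]
    congr 1 <;>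
      simp only [Finset.sum_union hd, Finset.sum_add_distrib]
  have e11 : Eneg w (switchSgn sgn θ) V1 V1 = Eneg w sgn V1 V1 := by
    refine Finset.sum_congr rfl fun u hu => Finset.sum_congr rfl fun v hv => ?_
    simp [switchSgn, hθ1 u hu, hθ1 v hv]
  have e22 : Eneg w (switchSgn sgn θ) V2 V2 = Eneg w sgn V2 V2 := by
    refine Finset.sum_congr rfl fun u hu => Finset.sum_congr rfl fun v hv => ?_
    simp [switchSgn, hθ2 u hu, hθ2 v hv]
  have e12 : Eneg w (switchSgn sgn θ) V1 V2 = Epos w sgn V1 V2 := by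
    refine Finset.sum_congr rfl fun u hu => Finset.sum_congr rfl fun v hv => ?_
    simp only [switchSgn, hθ1 u hu, hθ2 v hv]
    have : (1 : ℝ) * sgn u v * -1 = -1 ↔ sgn u v = 1 := by constructor <;> intro h <;> linarith
    by_cases h : sgn u v = 1 <;> simp [h, this]
  have e21 : Eneg w (switchSgn sgn θ) V2 V1 = Epos w sgn V2 V1 := by
    refine Finset.sum_congr rfl fun u hu => Finset.sum_congr rfl fun v hv => ?_
    simp only [switchSgn, hθ2 u hu, hθ1 v hv]
    have : (-1 : ℝ) * sgn u v * 1 = -1 ↔ sgn u v = 1 := by constructor <;> intro h <;> linarith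
    by_cases h : sgn u v = 1 <;> simp [h, this]
  rw [hsplit, e11, e22, e12, e21, Epos_comm w sgn hG V1 V2]
  ring

/-- For every nonempty `S ⊆ V`, the minimum of `β^σ(V₁,V₂)` over all
bipartitions `(V₁,V₂)` of `S` equals the minimum of `ρ^{σ'}(S)` over all signatures `σ'`
switching equivalent to `σ`. -/
theorem min_beta_eq_min_rho {N : ℕ} (w sgn : Fin N → Fin N → ℝ) (hG : IsWSG w sgn)
    (μ : Fin N → ℝ) (hμ : ∀ u, 0 < μ u) (S : Finset (Fin N)) (hS : S.Nonempty) :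
    sInf {x | ∃ V1 V2 : Finset (Fin N),
        Disjoint V1 V2 ∧ V1 ∪ V2 = S ∧ x = betaR w sgn μ V1 V2} =
      sInf {x | ∃ θ : Fin N → ℝ, (∀ u, θ u = 1 ∨ θ u = -1) ∧
        x = rho w (switchSgn sgn θ) μ S} := by
  congr 1
  ext x
  constructor
  · rintro ⟨V1, V2, hd, hu, rfl⟩
    refine ⟨fun u => if u ∈ V2 then -1 else 1, fun u => by by_cases h : u ∈ V2 <;> simp [h], ?_⟩
    rw [key_eq w sgn hG μ V1 V2 hd _
        (fun u hu' => by show (if u ∈ V2 then (-1:ℝ) else 1) = 1; rw [if_neg (Finset.disjoint_left.mp hd hu')])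
        (fun u hu' => by show (if u ∈ V2 then (-1:ℝ) else 1) = -1; rw [if_pos hu']), hu]
  · rintro ⟨θ, hpm, rfl⟩
    refine ⟨S.filter (fun u => θ u = 1), S.filter (fun u => θ u = -1), ?_, ?_, ?_⟩
    · rw [Finset.disjoint_left]
      intro a ha hb
      simp only [Finset.mem_filter] at ha hb
      rw [ha.2] at hb
      norm_num at hb
    · ext a
      simp only [Finset.mem_union, Finset.mem_filter]
      rcases hpm a with h | h <;> simp [h] <;> tauto
    · have hun : S.filter (fun u => θ u = 1) ∪ S.filter (fun u => θ u = -1) = S := by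
        ext a
        simp only [Finset.mem_union, Finset.mem_filter]
        rcases hpm a with h | h <;> simp [h] <;> tauto
      have hd : Disjoint (S.filter (fun u => θ u = 1)) (S.filter (fun u => θ u = -1)) := by
        rw [Finset.disjoint_left]
        intro a ha hb
        simp only [Finset.mem_filter] at ha hb
        rw [ha.2] at hb
        norm_num at hb
      rw [key_eq w sgn hG μ _ _ hd θ (fun u hu' => (Finset.mem_filter.mp hu').2)
        (fun u hu' => (Finset.mem_filter.mp hu').2), hun]

end SignedGraph
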